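/- arXiv:1505.07925 — 4 statements merged into one kernel-verified Lean document; each statement's English description precedes it below -/
import Mathlib

section
/- For a reversible, irreducible, aperiodic Markov chain on a finite state space with transition matrix P and stationary distribution π, and for any canonical path ensemble T (a collection containing, for each ordered pair of distinct states (γ,γ'), a unique simple path in the transition graph connecting them), the spectral gap satisfies Gap(P) = 1 − λ₂ ≥ 1 / (ρ(T) · ℓ(T)), where ℓ(T) is the maximal path length in the ensemble and ρ(T) = max over edges e of (1/Q(e)) · Σ_{paths T_{γ,γ'} containing e} π(γ)π(γ') is the path congestion parameter, with Q(γ,γ') = π(γ)P(γ,γ'). -/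
/-!
Sinclair's canonical path argument. For an eigenvector `v ⊥ π` with eigenvalue `λ`,
reversibility turns the Dirichlet form `𝓔(v) = ½ ∑ π(x) P(x,y) (v x - v y)²` into
`(1 - λ) ‖v‖²_π`, while `‖v‖²_π = ½ ∑ π(x) π(y) (v x - v y)²` is the Dirichlet form of the
chain that resamples from `π`. Writing `v x - v y` as a telescoping sum along the canonical path
from `x` to `y` and applying Cauchy–Schwarz bounds each pair's term by `ℓ` times a sum over the
path's edges; exchanging the order of summation collects, at each edge `e`, the congestion
`∑_{e ∈ T_{x,y}} π(x) π(y) ≤ ρ Q(e)`. Hence `‖v‖²_π ≤ ρ ℓ 𝓔(v) = ρ ℓ (1 - λ) ‖v‖²_π`.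
-/
open Matrix

namespace List

variable {α : Type*}

theorem sum_map_sub_zip_tail (v : α → ℝ) :
    ∀ {l : List α} {x y : α}, l.head? = some x → l.getLast? = some y →
      ((l.zip l.tail).map fun e => v e.1 - v e.2).sum = v x - v y
  | [], _, _, hx, _ => by simp at hx
  | [_], _, _, hx, hy => by simp_all
  | a :: b :: l, x, y, hx, hy => by
      rw [getLast?_cons_cons] at hy
      obtain rfl : a = x := by simpa using hx
      have ih := sum_map_sub_zip_tail v (l := b :: l) rfl hy
      simp only [tail_cons, zip_cons_cons, map_cons, sum_cons] at ih ⊢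
      rw [ih]
      ring

theorem Nodup.zip_tail {l : List α} (h : l.Nodup) : (l.zip l.tail).Nodup :=
  Nodup.of_map Prod.snd <| by
    rw [map_snd_zip (by simp)]
    exact h.sublist (tail_sublist l)

theorem IsChain.rel_of_mem_zip_tail {R : α → α → Prop} :
    ∀ {l : List α}, l.IsChain R → ∀ {a b : α}, (a, b) ∈ l.zip l.tail → R a b
  | [], _, _, _, h => by simp at h
  | [_], _, _, _, h => by simp at h
  | c :: d :: l, hl, a, b, h => by
      rw [isChain_cons_cons] at hl
      simp only [tail_cons, zip_cons_cons, mem_cons, Prod.mk.injEq] at h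
      rcases h with ⟨rfl, rfl⟩ | h
      · exact hl.1
      · exact IsChain.rel_of_mem_zip_tail hl.2 h

theorem sq_sub_le_length_mul_sum_sq [DecidableEq α] (v : α → ℝ) {l : List α} {x y : α}
    (hx : l.head? = some x) (hy : l.getLast? = some y) (hl : l.Nodup) :
    (v x - v y) ^ 2 ≤
      (l.length - 1 : ℝ) * ∑ e ∈ (l.zip l.tail).toFinset, (v e.1 - v e.2) ^ 2 := by
  have hlen : 1 ≤ l.length := length_pos_iff.2 (by rintro rfl; simp at hx)
  have hcard : ((l.zip l.tail).toFinset.card : ℝ) = l.length - 1 := by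
    rw [toFinset_card_of_nodup hl.zip_tail, length_zip, length_tail,
      min_eq_right (Nat.sub_le _ _), Nat.cast_sub hlen, Nat.cast_one]
  rw [← sum_map_sub_zip_tail v hx hy, ← sum_toFinset _ hl.zip_tail, ← hcard]
  exact sq_sum_le_card_mul_sum_sq

end List

section

variable {M : Type*} [Fintype M]

noncomputable def dirichletForm (P : Matrix M M ℝ) (π v : M → ℝ) : ℝ :=
  (∑ x, ∑ y, π x * P x y * (v x - v y) ^ 2) / 2

theorem dirichletForm_nonneg {P : Matrix M M ℝ} {π : M → ℝ} (hπ : ∀ x, 0 ≤ π x)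
    (hP : ∀ x y, 0 ≤ P x y) (v : M → ℝ) : 0 ≤ dirichletForm P π v := by
  refine div_nonneg ?_ zero_le_two
  exact Finset.sum_nonneg fun x _ => Finset.sum_nonneg fun y _ =>
    mul_nonneg (mul_nonneg (hπ x) (hP x y)) (sq_nonneg _)

theorem dirichletForm_eq_of_mulVec_eq_smul {P : Matrix M M ℝ} {π v : M → ℝ} {lam : ℝ}
    (hst : ∀ x, ∑ y, P x y = 1) (hrev : ∀ x y, π x * P x y = π y * P y x)
    (hv : P *ᵥ v = lam • v) :
    dirichletForm P π v = (1 - lam) * ∑ x, π x * v x ^ 2 := by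
  have hrow : ∀ x, ∑ y, π x * P x y * v x ^ 2 = π x * v x ^ 2 := fun x => by
    rw [← Finset.sum_mul, ← Finset.mul_sum, hst, mul_one]
  have hcol : ∀ y, ∑ x, π x * P x y * v y ^ 2 = π y * v y ^ 2 := fun y => by
    simp_rw [hrev _ y]
    exact hrow y
  have hcross : ∀ x, ∑ y, π x * P x y * (v x * v y) = lam * (π x * v x ^ 2) := fun x => by
    have hx : ∑ y, P x y * v y = lam * v x := by simpa [mulVec, dotProduct] using congrFun hv x
    calc ∑ y, π x * P x y * (v x * v y) = π x * v x * ∑ y, P x y * v y := by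
          rw [Finset.mul_sum]; exact Finset.sum_congr rfl fun y _ => by ring
      _ = lam * (π x * v x ^ 2) := by rw [hx]; ring
  have hexpand : ∀ x y, π x * P x y * (v x - v y) ^ 2 =
      π x * P x y * v x ^ 2 + π x * P x y * v y ^ 2 - 2 * (π x * P x y * (v x * v y)) :=
    fun x y => by ring
  unfold dirichletForm
  simp_rw [hexpand, Finset.sum_sub_distrib, Finset.sum_add_distrib, ← Finset.mul_sum, hrow,
    hcross]
  rw [Finset.sum_comm (f := fun x y => π x * P x y * v y ^ 2)]
  simp_rw [hcol, ← Finset.mul_sum]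
  ring

theorem dirichletForm_resample_eq {π v : M → ℝ} (hsum : ∑ x, π x = 1)
    (hv : ∑ x, π x * v x = 0) :
    dirichletForm (of fun _ y => π y) π v = ∑ x, π x * v x ^ 2 := by
  have hmulVec : (of fun _ y => π y) *ᵥ v = (0 : ℝ) • v := by
    ext x; simp [mulVec, dotProduct, hv]
  simpa only [sub_zero, one_mul] using
    dirichletForm_eq_of_mulVec_eq_smul (P := of fun _ y => π y)
      (fun _ => by simpa using hsum) (fun x y => mul_comm (π x) (π y)) hmulVec

variable [DecidableEq M]

def congestion (π : M → ℝ) (T : M → M → List M) (e : M × M) : ℝ :=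
  ∑ x, ∑ y, if x ≠ y ∧ e ∈ (T x y).zip (T x y).tail then π x * π y else 0

theorem congestion_le {P : Matrix M M ℝ} {π : M → ℝ} {T : M → M → List M} {ρ : ℝ}
    (hπ : ∀ x, 0 < π x) (hP : ∀ x y, 0 ≤ P x y)
    (hT : ∀ x y, x ≠ y → (T x y).IsChain fun a b => 0 < π a * P a b)
    (hρ : ∀ a b : M, 0 < π a * P a b → congestion π T (a, b) / (π a * P a b) ≤ ρ)
    (a b : M) : congestion π T (a, b) ≤ ρ * (π a * P a b) := by
  rcases (mul_nonneg (hπ a).le (hP a b)).lt_or_eq with hQ | hQ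
  · exact (div_le_iff₀ hQ).1 (hρ a b hQ)
  · rw [← hQ, mul_zero]
    refine (Finset.sum_eq_zero fun x _ => Finset.sum_eq_zero fun y _ => if_neg ?_).le
    exact fun ⟨hxy, he⟩ => ((hT x y hxy).rel_of_mem_zip_tail he).ne hQ

theorem mul_sq_sub_le_sum_path {π : M → ℝ} {T : M → M → List M} {ℓ : ℝ}
    (hπ : ∀ x, 0 < π x)
    (hT : ∀ x y, x ≠ y →
      (T x y).head? = some x ∧ (T x y).getLast? = some y ∧ (T x y).Nodup)
    (hℓ : ∀ x y, x ≠ y → ((T x y).length - 1 : ℝ) ≤ ℓ) (v : M → ℝ) (x y : M) :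
    π x * π y * (v x - v y) ^ 2 ≤
      ℓ * ∑ e : M × M, (if x ≠ y ∧ e ∈ (T x y).zip (T x y).tail then π x * π y else 0) *
        (v e.1 - v e.2) ^ 2 := by
  rcases eq_or_ne x y with rfl | hxy
  · simp
  obtain ⟨hx, hy, hnodup⟩ := hT x y hxy
  have hpath : ∑ e : M × M, (if x ≠ y ∧ e ∈ (T x y).zip (T x y).tail then π x * π y else 0) *
      (v e.1 - v e.2) ^ 2 =
      π x * π y * ∑ e ∈ ((T x y).zip (T x y).tail).toFinset, (v e.1 - v e.2) ^ 2 := by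
    simp_rw [ne_eq, hxy, not_false_eq_true, true_and, ite_mul, zero_mul, ← List.mem_toFinset,
      Finset.sum_ite_mem, Finset.univ_inter, Finset.mul_sum]
  have hπxy : 0 ≤ π x * π y := (mul_pos (hπ x) (hπ y)).le
  have hsum : 0 ≤ ∑ e ∈ ((T x y).zip (T x y).tail).toFinset, (v e.1 - v e.2) ^ 2 :=
    Finset.sum_nonneg fun _ _ => sq_nonneg _
  rw [hpath]
  calc π x * π y * (v x - v y) ^ 2
      ≤ π x * π y * (((T x y).length - 1 : ℝ) *
          ∑ e ∈ ((T x y).zip (T x y).tail).toFinset, (v e.1 - v e.2) ^ 2) := by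
        gcongr
        exact List.sq_sub_le_length_mul_sum_sq v hx hy hnodup
    _ ≤ π x * π y *
          (ℓ * ∑ e ∈ ((T x y).zip (T x y).tail).toFinset, (v e.1 - v e.2) ^ 2) := by
        gcongr
        exact hℓ x y hxy
    _ = _ := by ring

theorem dirichletForm_resample_le_mul_dirichletForm {P : Matrix M M ℝ} {π : M → ℝ}
    {T : M → M → List M} {ℓ ρ : ℝ} (hπ : ∀ x, 0 < π x) (hP : ∀ x y, 0 ≤ P x y)
    (hT : ∀ x y, x ≠ y → (T x y).head? = some x ∧ (T x y).getLast? = some y ∧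
      (T x y).Nodup ∧ (T x y).IsChain fun a b => 0 < π a * P a b)
    (hℓ : ∀ x y, x ≠ y → ((T x y).length - 1 : ℝ) ≤ ℓ)
    (hρ : ∀ a b : M, 0 < π a * P a b → congestion π T (a, b) / (π a * P a b) ≤ ρ)
    (v : M → ℝ) :
    dirichletForm (of fun _ y => π y) π v ≤ ρ * ℓ * dirichletForm P π v := by
  rcases subsingleton_or_nontrivial M with hM | hM
  · have hv : ∀ x y : M, v x - v y = 0 := fun x y => by rw [Subsingleton.elim x y, sub_self]
    simp [dirichletForm, hv]
  obtain ⟨x₀, y₀, hxy₀⟩ := exists_pair_ne M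
  have hℓ₀ : 0 ≤ ℓ := by
    have hne : T x₀ y₀ ≠ [] := fun h => by simpa [h] using (hT x₀ y₀ hxy₀).1
    have hlen : (1 : ℝ) ≤ (T x₀ y₀).length := by exact_mod_cast List.length_pos_iff.2 hne
    linarith [hℓ x₀ y₀ hxy₀]
  have hpair := mul_sq_sub_le_sum_path hπ
    (fun x y hxy => ⟨(hT x y hxy).1, (hT x y hxy).2.1, (hT x y hxy).2.2.1⟩) hℓ v
  have hedge := congestion_le hπ hP (fun x y hxy => (hT x y hxy).2.2.2) hρ
  unfold dirichletForm
  rw [mul_div_assoc']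
  gcongr
  calc ∑ x, ∑ y, π x * (of fun _ y => π y) x y * (v x - v y) ^ 2
      ≤ ∑ x, ∑ y, ℓ * ∑ e : M × M,
          (if x ≠ y ∧ e ∈ (T x y).zip (T x y).tail then π x * π y else 0) *
            (v e.1 - v e.2) ^ 2 := by
        simp only [of_apply]
        exact Finset.sum_le_sum fun x _ => Finset.sum_le_sum fun y _ => hpair x y
    _ = ℓ * ∑ e : M × M, congestion π T e * (v e.1 - v e.2) ^ 2 := by
        simp_rw [← Finset.mul_sum, congestion, Finset.sum_mul]
        rw [Finset.sum_congr rfl fun x _ => Finset.sum_comm, Finset.sum_comm]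
    _ ≤ ℓ * ∑ e : M × M, ρ * (π e.1 * P e.1 e.2) * (v e.1 - v e.2) ^ 2 := by
        gcongr with e
        exact hedge e.1 e.2
    _ = ρ * ℓ * ∑ x, ∑ y, π x * P x y * (v x - v y) ^ 2 := by
        rw [Fintype.sum_prod_type, mul_comm ρ, mul_assoc]
        simp_rw [Finset.mul_sum, mul_assoc]

end

theorem canonical_path_spectral_gap_general {M : Type*} [Fintype M] [DecidableEq M]
    (P : Matrix M M ℝ) (π : M → ℝ)
    (hπ : ∀ x, 0 < π x) (hsum : ∑ x, π x = 1)
    (hst : ∀ x, ∑ y, P x y = 1) (hnn : ∀ x y, 0 ≤ P x y)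
    (hrev : ∀ x y, π x * P x y = π y * P y x)
    (T : M → M → List M)
    (hpath : ∀ x y, x ≠ y → (T x y).head? = some x ∧ (T x y).getLast? = some y ∧
      (T x y).Nodup ∧ (T x y).Chain' (fun a b => 0 < π a * P a b))
    (ℓ ρ : ℝ)
    (hℓ : ∀ x y, x ≠ y → ((T x y).length - 1 : ℝ) ≤ ℓ)
    (hρ : ∀ a b : M, 0 < π a * P a b →
      (∑ x, ∑ y, if x ≠ y ∧ (a, b) ∈ (T x y).zip (T x y).tail then π x * π y else 0)
        / (π a * P a b) ≤ ρ)
    (lam₂ : ℝ)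
    (hlam : IsGreatest {l : ℝ | ∃ v : M → ℝ, v ≠ 0 ∧ (∑ x, π x * v x) = 0 ∧
      P.mulVec v = l • v} lam₂) :
    1 / (ρ * ℓ) ≤ 1 - lam₂ := by
  obtain ⟨⟨v, hv0, hvπ, hv⟩, -⟩ := hlam
  obtain ⟨x₀, hx₀⟩ := Function.ne_iff.1 hv0
  have hvar : 0 < ∑ x, π x * v x ^ 2 :=
    Finset.sum_pos' (fun x _ => mul_nonneg (hπ x).le (sq_nonneg _))
      ⟨x₀, Finset.mem_univ _, mul_pos (hπ x₀) (pow_two_pos_of_ne_zero hx₀)⟩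
  have hgap := dirichletForm_eq_of_mulVec_eq_smul hst hrev hv
  have hgap_nonneg : 0 ≤ 1 - lam₂ :=
    nonneg_of_mul_nonneg_left (hgap ▸ dirichletForm_nonneg (fun x => (hπ x).le) hnn v) hvar
  have hpoincare := dirichletForm_resample_le_mul_dirichletForm hπ hnn hpath hℓ hρ v
  rw [dirichletForm_resample_eq hsum hvπ, hgap] at hpoincare
  have hρℓ : 0 < ρ * ℓ := by
    by_contra! h
    linarith [mul_nonpos_of_nonpos_of_nonneg h (mul_nonneg hgap_nonneg hvar.le)]
  rw [div_le_iff₀ hρℓ]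
  nlinarith

/-- Sinclair's canonical path bound: for a reversible, irreducible,
aperiodic Markov chain with transition matrix `P` and stationary distribution `π`,
and any canonical path ensemble `T` (a unique simple path through edges of positive
weight `Q(a,b) = π(a)P(a,b)` for each ordered pair of distinct states), the spectral
gap satisfies `1 - lam₂ ≥ 1/(ρ(T) ℓ(T))`, where `ℓ` bounds the path lengths and `ρ`
bounds the congestion of every edge.  Here `lam₂`, the second largest eigenvalue of
`P`, is characterized as the greatest eigenvalue of `P` possessing an eigenvector
orthogonal to `π`. -/
theorem canonical_path_spectral_gap {M : Type*} [Fintype M] [DecidableEq M]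
    (P : Matrix M M ℝ) (π : M → ℝ)
    (hπ : ∀ x, 0 < π x) (hsum : ∑ x, π x = 1)
    (hst : ∀ x, ∑ y, P x y = 1) (hnn : ∀ x y, 0 ≤ P x y)
    (hrev : ∀ x y, π x * P x y = π y * P y x)
    (hprimitive : ∃ N : ℕ, ∀ k, N ≤ k → ∀ x y, 0 < (P ^ k) x y)
    (T : M → M → List M)
    (hpath : ∀ x y, x ≠ y → (T x y).head? = some x ∧ (T x y).getLast? = some y ∧
      (T x y).Nodup ∧ (T x y).Chain' (fun a b => 0 < π a * P a b))
    (ℓ ρ : ℝ)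
    (hℓ : ∀ x y, x ≠ y → ((T x y).length - 1 : ℝ) ≤ ℓ)
    (hρ : ∀ a b : M, 0 < π a * P a b →
      (∑ x, ∑ y, if x ≠ y ∧ (a, b) ∈ (T x y).zip (T x y).tail then π x * π y else 0)
        / (π a * P a b) ≤ ρ)
    (lam₂ : ℝ)
    (hlam : IsGreatest {l : ℝ | ∃ v : M → ℝ, v ≠ 0 ∧ (∑ x, π x * v x) = 0 ∧
      P.mulVec v = l • v} lam₂) :
    1 / (ρ * ℓ) ≤ 1 - lam₂ :=
  canonical_path_spectral_gap_general P π hπ hsum hst hnn hrev T hpath ℓ ρ hℓ hρ lam₂ hlam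
end

section
/- Summing the rank-one projection gains over the missing influential indices: for γ underfitted (γ*∖γ nonempty), under the restricted eigenvalue condition with parameter ν for sets of size ≤ |γ ∪ γ*|, Σ_{ℓ ∈ γ*∖γ} ( ||Φ_{γ∪{ℓ}} X_{γ*} β*||² − ||Φ_γ X_{γ*} β*||² ) ≥ ν · (β*_{γ*})^T X_{γ*}^T (I − Φ_γ) X_{γ*} β*_{γ*} ≥ n ν² ||β*_{γ*∖γ}||². -/
/-!
Let `r = (I - Φ_γ) X β*` be the residual and `c_ℓ = ⟨X_ℓ, r⟩`. Since `γ ⊆ γ ∪ {ℓ}`,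
`Φ_{γ∪{ℓ}} - Φ_γ` is an orthogonal projection fixing `(I - Φ_γ) X_ℓ`, a vector of squared norm
at most `‖X_ℓ‖² = n`; Cauchy–Schwarz in its range gives `c_ℓ² ≤ n · gain_ℓ`.
The residual equals `X (β* - b)` for some `b` supported on `γ`, so the restricted eigenvalue
bound on `γ ∪ γ*` gives `‖r‖² ≥ n ν ‖β*_{γ*∖γ}‖²`, the second inequality.
Since `c` vanishes on `γ`, `‖r‖² = ⟨β*, c⟩ = Σ_{ℓ ∈ γ*∖γ} β*_ℓ c_ℓ`, and Cauchy–Schwarz combined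
with the previous bound yields `n ν ‖r‖² ≤ Σ c_ℓ² ≤ n Σ gain_ℓ`, the first inequality.
-/

open Matrix BigOperators

noncomputable def subCols {n p : ℕ} (X : Matrix (Fin n) (Fin p) ℝ) (γ : Finset (Fin p)) :
    Matrix (Fin n) {j // j ∈ γ} ℝ := Matrix.of fun i j => X i j.1

noncomputable def gram {n p : ℕ} (X : Matrix (Fin n) (Fin p) ℝ) (γ : Finset (Fin p)) :
    Matrix {j // j ∈ γ} {j // j ∈ γ} ℝ := (subCols X γ)ᵀ * subCols X γ

noncomputable def proj {n p : ℕ} (X : Matrix (Fin n) (Fin p) ℝ) (γ : Finset (Fin p)) :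
    Matrix (Fin n) (Fin n) ℝ := subCols X γ * (gram X γ)⁻¹ * (subCols X γ)ᵀ

namespace Matrix

variable {m ι R : Type*} [Fintype m] [Fintype ι]

lemma mulVec_dotProduct_eq [CommSemiring R] (A : Matrix m ι R) (v : ι → R) (w : m → R) :
    (A *ᵥ v) ⬝ᵥ w = v ⬝ᵥ (Aᵀ *ᵥ w) :=
  (dotProduct_comm _ _).trans (dotProduct_transpose_mulVec A v w).symm

lemma dotProduct_self_eq_sum_sq [CommSemiring R] (v : m → R) : v ⬝ᵥ v = ∑ i, v i ^ 2 := by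
  simp only [dotProduct, sq]

variable [CommRing R] [LinearOrder R] [IsStrictOrderedRing R]

lemma sq_dotProduct_le (v w : m → R) : (v ⬝ᵥ w) ^ 2 ≤ (v ⬝ᵥ v) * (w ⬝ᵥ w) := by
  rw [dotProduct_self_eq_sum_sq, dotProduct_self_eq_sum_sq]
  exact Finset.sum_mul_sq_le_sq_mul_sq _ v w

lemma dotProduct_self_nonneg (v : m → R) : 0 ≤ v ⬝ᵥ v :=
  Finset.sum_nonneg fun i _ => mul_self_nonneg (v i)

end Matrix

lemma mul_le_of_sq_le_mul {R : Type*} [CommRing R] [LinearOrder R] [IsStrictOrderedRing R]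
    {a b c r : R} (ha : 0 ≤ a) (hc : 0 ≤ c) (hsq : r ^ 2 ≤ b * c) (hb : a * b ≤ r) :
    a * r ≤ c := by
  by_contra! h
  nlinarith [mul_le_mul_of_nonneg_left hsq ha, mul_le_mul_of_nonneg_right hb hc]

namespace IsStarProjection

variable {m : Type*} [Fintype m] {P Q : Matrix m m ℝ}

lemma transpose_eq (hP : IsStarProjection P) : Pᵀ = P := by
  simpa [star_eq_conjTranspose] using hP.isSelfAdjoint.star_eq

lemma mulVec_dotProduct_mulVec (hP : IsStarProjection P) (u : m → ℝ) :
    (P *ᵥ u) ⬝ᵥ (P *ᵥ u) = u ⬝ᵥ (P *ᵥ u) := by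
  rw [mulVec_dotProduct_eq, mulVec_mulVec, hP.transpose_eq, hP.isIdempotentElem.eq]

lemma dotProduct_mulVec_nonneg (hP : IsStarProjection P) (u : m → ℝ) :
    0 ≤ u ⬝ᵥ (P *ᵥ u) :=
  hP.mulVec_dotProduct_mulVec u ▸ dotProduct_self_nonneg _

lemma dotProduct_one_sub_mulVec_le [DecidableEq m] (hP : IsStarProjection P) (u : m → ℝ) :
    u ⬝ᵥ ((1 - P) *ᵥ u) ≤ u ⬝ᵥ u := by
  rw [sub_mulVec, one_mulVec, dotProduct_sub, sub_le_self_iff]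
  exact hP.dotProduct_mulVec_nonneg u

lemma sq_dotProduct_le_of_mulVec_eq (hQ : IsStarProjection Q) {x : m → ℝ} (hx : Q *ᵥ x = x)
    (u : m → ℝ) : (x ⬝ᵥ u) ^ 2 ≤ (x ⬝ᵥ x) * (u ⬝ᵥ (Q *ᵥ u)) := by
  have hxu : x ⬝ᵥ u = x ⬝ᵥ (Q *ᵥ u) := by
    conv_lhs => rw [← hx]
    rw [mulVec_dotProduct_eq, hQ.transpose_eq]
  rw [hxu, ← hQ.mulVec_dotProduct_mulVec]
  exact sq_dotProduct_le x _

lemma sum_sq_mulVec_sub_sum_sq_mulVec (hP : IsStarProjection P) (hQ : IsStarProjection Q)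
    (u : m → ℝ) :
    ∑ i, (Q *ᵥ u) i ^ 2 - ∑ i, (P *ᵥ u) i ^ 2 = u ⬝ᵥ ((Q - P) *ᵥ u) := by
  rw [← dotProduct_self_eq_sum_sq, ← dotProduct_self_eq_sum_sq, hP.mulVec_dotProduct_mulVec,
    hQ.mulVec_dotProduct_mulVec, sub_mulVec, dotProduct_sub]

end IsStarProjection

section Projection

variable {n p : ℕ} (X : Matrix (Fin n) (Fin p) ℝ) (γ : Finset (Fin p))

/-- `ν` bounds the smallest eigenvalue of `(1/n) X_γᵀ X_γ` from below. -/
def HasRestrictedEigenvalue (ν : ℝ) : Prop :=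
  ∀ v : {j // j ∈ γ} → ℝ, ν * (∑ j, v j ^ 2) ≤ v ⬝ᵥ (((n : ℝ)⁻¹ • gram X γ).mulVec v)

lemma subCols_mulVec {w : Fin p → ℝ} (hw : ∀ j ∉ γ, w j = 0) :
    subCols X γ *ᵥ (fun j => w j) = X *ᵥ w := by
  ext i
  simp only [mulVec, dotProduct, subCols, of_apply]
  rw [Finset.sum_coe_sort γ (fun j => X i j * w j)]
  exact Finset.sum_subset (Finset.subset_univ γ) fun j _ hj => by rw [hw j hj, mul_zero]

lemma exists_proj_mulVec_eq (y : Fin n → ℝ) :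
    ∃ b : Fin p → ℝ, (∀ j ∉ γ, b j = 0) ∧ proj X γ *ᵥ y = X *ᵥ b := by
  set z := ((gram X γ)⁻¹ * (subCols X γ)ᵀ) *ᵥ y
  refine ⟨fun j => if h : j ∈ γ then z ⟨j, h⟩ else 0, fun j hj => dif_neg hj, ?_⟩
  rw [← subCols_mulVec X γ fun j hj => dif_neg hj, proj, Matrix.mul_assoc, ← mulVec_mulVec]
  simp only [Finset.coe_mem, dif_pos, z]

variable {X γ}

lemma HasRestrictedEigenvalue.isUnit_det {ν : ℝ} (h : HasRestrictedEigenvalue X γ ν)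
    (hν : 0 < ν) : IsUnit (gram X γ).det := by
  rw [isUnit_iff_ne_zero, Ne, ← exists_mulVec_eq_zero_iff]
  rintro ⟨v, hv, hGv⟩
  have hle := h v
  rw [smul_mulVec, hGv, smul_zero, dotProduct_zero] at hle
  obtain ⟨j, hj⟩ := Function.ne_iff.mp hv
  have hpos : 0 < ∑ j, v j ^ 2 :=
    Finset.sum_pos' (fun i _ => sq_nonneg _) ⟨j, Finset.mem_univ j, pow_two_pos_of_ne_zero hj⟩
  exact (mul_pos hν hpos).not_ge hle

lemma HasRestrictedEigenvalue.mul_sum_sq_le {ν : ℝ} (h : HasRestrictedEigenvalue X γ ν)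
    {w : Fin p → ℝ} (hw : ∀ j ∉ γ, w j = 0) :
    n * ν * ∑ j ∈ γ, w j ^ 2 ≤ (X *ᵥ w) ⬝ᵥ (X *ᵥ w) := by
  obtain rfl | hn := Nat.eq_zero_or_pos n
  · simp [dotProduct]
  have hle := h fun j => w j
  rw [smul_mulVec, dotProduct_smul, smul_eq_mul, Finset.sum_coe_sort γ fun j => w j ^ 2] at hle
  rw [← subCols_mulVec X γ hw, mulVec_dotProduct_eq, mulVec_mulVec, ← _root_.gram]
  calc n * ν * ∑ j ∈ γ, w j ^ 2 = n * (ν * ∑ j ∈ γ, w j ^ 2) := mul_assoc _ _ _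
    _ ≤ _ := mul_le_mul_of_nonneg_left hle n.cast_nonneg
    _ = _ := mul_inv_cancel_left₀ (Nat.cast_pos.2 hn).ne' _

lemma gram_transpose : (gram X γ)ᵀ = gram X γ := by
  rw [_root_.gram, transpose_mul, transpose_transpose]

lemma proj_transpose : (proj X γ)ᵀ = proj X γ := by
  rw [proj, transpose_mul, transpose_mul, transpose_transpose, transpose_nonsing_inv,
    gram_transpose, Matrix.mul_assoc]

variable (hdet : IsUnit (gram X γ).det)
include hdet

lemma proj_mul_subCols : proj X γ * subCols X γ = subCols X γ := by
  rw [proj, Matrix.mul_assoc, Matrix.mul_assoc, ← _root_.gram, nonsing_inv_mul _ hdet,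
    Matrix.mul_one]

lemma isStarProjection_proj : IsStarProjection (proj X γ) where
  isIdempotentElem := by
    change proj X γ * proj X γ = proj X γ
    nth_rewrite 2 [proj]
    rw [← Matrix.mul_assoc, ← Matrix.mul_assoc, proj_mul_subCols hdet, proj]
  isSelfAdjoint := by
    rw [IsSelfAdjoint, star_eq_conjTranspose, conjTranspose_eq_transpose_of_trivial,
      proj_transpose]

lemma proj_mulVec_col {j : Fin p} (hj : j ∈ γ) : proj X γ *ᵥ Xᵀ j = Xᵀ j := by
  ext i
  simpa [mul_apply, mulVec, dotProduct, subCols] using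
    congrFun (congrFun (proj_mul_subCols hdet) i) ⟨j, hj⟩

lemma transpose_mulVec_one_sub_proj_mulVec {j : Fin p} (hj : j ∈ γ) (y : Fin n → ℝ) :
    (Xᵀ *ᵥ ((1 - proj X γ) *ᵥ y)) j = 0 := by
  change Xᵀ j ⬝ᵥ _ = 0
  rw [dotProduct_comm, mulVec_dotProduct_eq, transpose_sub, transpose_one, proj_transpose,
    sub_mulVec, one_mulVec, proj_mulVec_col hdet hj, sub_self, dotProduct_zero]

omit hdet in
lemma proj_mul_proj_of_subset {γ' : Finset (Fin p)} (hdet' : IsUnit (gram X γ').det)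
    (hγ : γ ⊆ γ') : proj X γ' * proj X γ = proj X γ := by
  have hcols : proj X γ' * subCols X γ = subCols X γ := by
    ext i k
    simpa [mul_apply, mulVec, dotProduct, subCols] using
      congrFun (proj_mulVec_col hdet' (hγ k.2)) i
  nth_rewrite 2 [proj]
  rw [← Matrix.mul_assoc, ← Matrix.mul_assoc, hcols]
  rfl

end Projection

section Residual

variable {n p : ℕ} {X : Matrix (Fin n) (Fin p) ℝ} {γ γs : Finset (Fin p)} {β : Fin p → ℝ}

lemma mul_sum_sq_sdiff_le_residual {ν : ℝ} (hRE : HasRestrictedEigenvalue X (γ ∪ γs) ν)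
    (hν : 0 ≤ ν) (hβ : ∀ j ∉ γs, β j = 0) :
    n * ν * ∑ j ∈ γs \ γ, β j ^ 2 ≤
      ((1 - proj X γ) *ᵥ (X *ᵥ β)) ⬝ᵥ ((1 - proj X γ) *ᵥ (X *ᵥ β)) := by
  obtain ⟨b, hb, hPb⟩ := exists_proj_mulVec_eq X γ (X *ᵥ β)
  have hsupp : ∀ j ∉ γ ∪ γs, (β - b) j = 0 := fun j hj => by
    rw [Finset.mem_union, not_or] at hj
    rw [Pi.sub_apply, hβ j hj.2, hb j hj.1, sub_zero]
  rw [sub_mulVec, one_mulVec, hPb, ← mulVec_sub]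
  refine le_trans ?_ (hRE.mul_sum_sq_le hsupp)
  gcongr
  calc ∑ j ∈ γs \ γ, β j ^ 2 = ∑ j ∈ γs \ γ, (β - b) j ^ 2 :=
        Finset.sum_congr rfl fun j hj => by
          rw [Pi.sub_apply, hb j (Finset.mem_sdiff.1 hj).2, sub_zero]
    _ ≤ ∑ j ∈ γ ∪ γs, (β - b) j ^ 2 :=
        Finset.sum_le_sum_of_subset_of_nonneg
          (Finset.sdiff_subset.trans Finset.subset_union_right) fun _ _ _ => sq_nonneg _

lemma residual_dotProduct_self_eq (hdet : IsUnit (gram X γ).det) (hβ : ∀ j ∉ γs, β j = 0) :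
    ((1 - proj X γ) *ᵥ (X *ᵥ β)) ⬝ᵥ ((1 - proj X γ) *ᵥ (X *ᵥ β)) =
      ∑ j ∈ γs \ γ, β j * (Xᵀ *ᵥ ((1 - proj X γ) *ᵥ (X *ᵥ β))) j := by
  rw [(isStarProjection_proj hdet).one_sub.mulVec_dotProduct_mulVec, mulVec_dotProduct_eq X β,
    dotProduct]
  symm
  apply Finset.sum_subset (Finset.subset_univ _)
  intro j _ hj
  by_cases hjs : j ∈ γs
  · have hjγ : j ∈ γ := of_not_not fun hjγ => hj (Finset.mem_sdiff.2 ⟨hjs, hjγ⟩)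
    rw [transpose_mulVec_one_sub_proj_mulVec hdet hjγ, mul_zero]
  · rw [hβ j hjs, zero_mul]

lemma sq_transpose_mulVec_residual_le {ℓ : Fin p} (hdet : IsUnit (gram X γ).det)
    (hdetℓ : IsUnit (gram X (insert ℓ γ)).det) (u : Fin n → ℝ) :
    (Xᵀ *ᵥ ((1 - proj X γ) *ᵥ u)) ℓ ^ 2 ≤
      (Xᵀ ℓ ⬝ᵥ Xᵀ ℓ) * (∑ i, (proj X (insert ℓ γ) *ᵥ u) i ^ 2 - ∑ i, (proj X γ *ᵥ u) i ^ 2) := by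
  set P := proj X γ
  set P₁ := proj X (insert ℓ γ)
  have hP := isStarProjection_proj hdet
  have hP₁ := isStarProjection_proj hdetℓ
  have hP₁P : P₁ * P = P := proj_mul_proj_of_subset hdetℓ (Finset.subset_insert ℓ γ)
  have hQ : IsStarProjection (P₁ - P) := hP.sub_of_mul_eq_right hP₁ hP₁P
  set x := (1 - P) *ᵥ Xᵀ ℓ
  have hQx : (P₁ - P) *ᵥ x = x := by
    have : (P₁ - P) * (1 - P) = P₁ - P := by
      rw [Matrix.mul_sub, Matrix.mul_one, Matrix.sub_mul, hP₁P, hP.isIdempotentElem.eq, sub_self,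
        sub_zero]
    rw [mulVec_mulVec, this, sub_mulVec, proj_mulVec_col hdetℓ (Finset.mem_insert_self ℓ γ)]
    simp only [x, sub_mulVec, one_mulVec]
  have hxu : (Xᵀ *ᵥ ((1 - P) *ᵥ u)) ℓ = x ⬝ᵥ u := by
    change Xᵀ ℓ ⬝ᵥ _ = _
    rw [dotProduct_comm, mulVec_dotProduct_eq, hP.one_sub.transpose_eq, dotProduct_comm]
  have hxx : x ⬝ᵥ x ≤ Xᵀ ℓ ⬝ᵥ Xᵀ ℓ := by
    rw [hP.one_sub.mulVec_dotProduct_mulVec]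
    exact hP.dotProduct_one_sub_mulVec_le _
  rw [hxu, hP.sum_sq_mulVec_sub_sum_sq_mulVec hP₁]
  exact (hQ.sq_dotProduct_le_of_mulVec_eq hQx u).trans
    (mul_le_mul_of_nonneg_right hxx (hQ.dotProduct_mulVec_nonneg u))

lemma sum_sq_transpose_mulVec_residual_le (hnorm : ∀ j, ∑ i, X i j ^ 2 = n)
    (hdet : ∀ γ' ⊆ γ ∪ γs, IsUnit (gram X γ').det) (u : Fin n → ℝ) :
    ∑ ℓ ∈ γs \ γ, (Xᵀ *ᵥ ((1 - proj X γ) *ᵥ u)) ℓ ^ 2 ≤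
      n * ∑ ℓ ∈ γs \ γ,
        (∑ i, (proj X (insert ℓ γ) *ᵥ u) i ^ 2 - ∑ i, (proj X γ *ᵥ u) i ^ 2) := by
  rw [Finset.mul_sum]
  refine Finset.sum_le_sum fun ℓ hℓ => ?_
  have hsub : insert ℓ γ ⊆ γ ∪ γs := Finset.insert_subset
    (Finset.mem_union_right _ (Finset.mem_sdiff.1 hℓ).1) Finset.subset_union_left
  simpa only [dotProduct_self_eq_sum_sq, transpose_apply, hnorm] using
    sq_transpose_mulVec_residual_le (hdet γ Finset.subset_union_left) (hdet _ hsub) u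

end Residual

theorem sum_forward_gains_general {n p : ℕ} (X : Matrix (Fin n) (Fin p) ℝ)
    (γ γs : Finset (Fin p))
    (hnorm : ∀ j : Fin p, ∑ i, (X i j) ^ 2 = (n : ℝ))
    (ν : ℝ) (hν : 0 < ν)
    (hRE : ∀ γ' : Finset (Fin p), γ'.card ≤ (γ ∪ γs).card →
      ∀ v : {j // j ∈ γ'} → ℝ,
        ν * (∑ j, v j ^ 2) ≤ v ⬝ᵥ (((n : ℝ)⁻¹ • gram X γ').mulVec v))
    (β : Fin p → ℝ) (hβ : ∀ j ∉ γs, β j = 0) :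
    ν * ((X.mulVec β) ⬝ᵥ ((1 - proj X γ).mulVec (X.mulVec β))) ≤
      (∑ ℓ ∈ γs \ γ,
        ((∑ i, ((proj X (insert ℓ γ)).mulVec (X.mulVec β) i) ^ 2) -
          (∑ i, ((proj X γ).mulVec (X.mulVec β) i) ^ 2))) ∧
    (n : ℝ) * ν ^ 2 * (∑ j ∈ γs \ γ, (β j) ^ 2) ≤
      ν * ((X.mulVec β) ⬝ᵥ ((1 - proj X γ).mulVec (X.mulVec β))) := by
  obtain rfl | hn := Nat.eq_zero_or_pos n
  · simp [dotProduct]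
  have hdet : ∀ γ' ⊆ γ ∪ γs, IsUnit (gram X γ').det := fun γ' hγ' =>
    HasRestrictedEigenvalue.isUnit_det (hRE γ' (Finset.card_le_card hγ')) hν
  have hdetγ := hdet γ Finset.subset_union_left
  set r := (1 - proj X γ) *ᵥ (X *ᵥ β)
  have hur : (X *ᵥ β) ⬝ᵥ r = r ⬝ᵥ r :=
    ((isStarProjection_proj hdetγ).one_sub.mulVec_dotProduct_mulVec _).symm
  have hlow : n * ν * ∑ j ∈ γs \ γ, β j ^ 2 ≤ r ⬝ᵥ r :=
    mul_sum_sq_sdiff_le_residual (hRE _ le_rfl) hν.le hβ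
  have hcs : (r ⬝ᵥ r) ^ 2 ≤ (∑ j ∈ γs \ γ, β j ^ 2) * ∑ j ∈ γs \ γ, (Xᵀ *ᵥ r) j ^ 2 := by
    rw [residual_dotProduct_self_eq hdetγ hβ]
    exact Finset.sum_mul_sq_le_sq_mul_sq _ _ _
  have hgains := sum_sq_transpose_mulVec_residual_le hnorm hdet (X *ᵥ β)
  have hc : n * ν * (r ⬝ᵥ r) ≤ ∑ ℓ ∈ γs \ γ, (Xᵀ *ᵥ r) ℓ ^ 2 :=
    mul_le_of_sq_le_mul (by positivity) (Finset.sum_nonneg fun _ _ => sq_nonneg _) hcs hlow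
  rw [hur]
  exact ⟨le_of_mul_le_mul_left (by linarith) (Nat.cast_pos.2 hn), by nlinarith⟩

/-- summing the rank-one projection gains over the missing influential
indices `ℓ ∈ γ*∖γ`:
`Σ_ℓ (‖Φ_{γ∪{ℓ}} X β*‖² - ‖Φ_γ X β*‖²) ≥ ν (Xβ*)ᵀ(I - Φ_γ)(Xβ*) ≥ n ν² ‖β*_{γ*∖γ}‖²`,
under the restricted eigenvalue condition at level ν for sets of size ≤ `|γ ∪ γ*|`
and column normalization `‖X_j‖² = n`. -/
theorem sum_forward_gains {n p : ℕ} (X : Matrix (Fin n) (Fin p) ℝ)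
    (γ γs : Finset (Fin p)) (hne : (γs \ γ).Nonempty)
    (hnorm : ∀ j : Fin p, ∑ i, (X i j) ^ 2 = (n : ℝ))
    (ν : ℝ) (hν : 0 < ν)
    (hRE : ∀ γ' : Finset (Fin p), γ'.card ≤ (γ ∪ γs).card →
      ∀ v : {j // j ∈ γ'} → ℝ,
        ν * (∑ j, v j ^ 2) ≤ v ⬝ᵥ (((n : ℝ)⁻¹ • gram X γ').mulVec v))
    (β : Fin p → ℝ) (hβ : ∀ j ∉ γs, β j = 0) :
    ν * ((X.mulVec β) ⬝ᵥ ((1 - proj X γ).mulVec (X.mulVec β))) ≤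
      (∑ ℓ ∈ γs \ γ,
        ((∑ i, ((proj X (insert ℓ γ)).mulVec (X.mulVec β) i) ^ 2) -
          (∑ i, ((proj X γ).mulVec (X.mulVec β) i) ^ 2))) ∧
    (n : ℝ) * ν ^ 2 * (∑ j ∈ γs \ γ, (β j) ^ 2) ≤
      ν * ((X.mulVec β) ⬝ᵥ ((1 - proj X γ).mulVec (X.mulVec β))) :=
  sum_forward_gains_general X γ γs hnorm ν hν hRE β hβ
end

section
/- Let γ be underfitted and saturated (|γ| = s₀ and γ*∖γ nonempty), let j ∈ γ*∖γ, set γ̃ = γ ∪ {j}, and let k minimize ||X β̂(γ̃∖{k}) − X_{γ*∖γ̃} β*_{γ*∖γ̃}||² over k ∈ γ∖γ*. Then ||Φ_{γ̃} X_{γ*} β*||² − ||Φ_{γ̃∖{k}} X_{γ*} β*||² ≤ n ω(X) ||β*_{γ*∖γ}||² / (s₀ − s*), where ω(X) = max_γ ||(X_γ^T X_γ)^{-1} X_γ^T X_{γ*∖γ}||_op² and s* = |γ*|. -/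
open Matrix BigOperators

/-!
Write `R(σ) = ‖v - Φ_σ v‖²` for the least-squares residual of `v = X_{γ*∖γ̃} β*_{γ*∖γ̃}` on the
columns `σ`. Since `X β* = X_{γ̃} β*_{γ̃} + v` and `k ∉ γ*`, the first summand lies in the column
spaces of both `γ̃` and `γ̃∖{k}`, and Pythagoras turns the loss into `R(γ̃∖{k}) - R(γ̃)`.
Deleting the coordinate `k'` from the least-squares coefficient `c` of `v` on `γ̃` is a competitor
on `γ̃∖{k'}` with residual `R(γ̃) + n c_{k'}²`, so the minimality of `k` and averaging over the
`m = |γ∖γ*| ≥ s₀ - s*` choices of `k'` give `m (R(γ̃∖{k}) - R(γ̃)) ≤ n ‖c‖² ≤ n ω ‖β*_{γ*∖γ}‖²`.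
-/

namespace BackwardSwap

section Pythagoras

variable {ι : Type*} [Fintype ι] {u w : ι → ℝ}

lemma sum_sq_add_of_dotProduct_eq_zero (h : u ⬝ᵥ w = 0) :
    ∑ i, (u + w) i ^ 2 = ∑ i, u i ^ 2 + ∑ i, w i ^ 2 := by
  simp only [dotProduct] at h
  simp only [Pi.add_apply, add_sq, Finset.sum_add_distrib, mul_assoc, ← Finset.mul_sum, h]
  ring

lemma sum_sq_sub_of_dotProduct_eq_zero (h : u ⬝ᵥ w = 0) :
    ∑ i, (u - w) i ^ 2 = ∑ i, u i ^ 2 + ∑ i, w i ^ 2 := by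
  rw [sub_eq_add_neg, sum_sq_add_of_dotProduct_eq_zero (by rw [dotProduct_neg, h, neg_zero])]
  simp

end Pythagoras

lemma le_div_of_mul_le_of_le {D N m q : ℝ} (h : m * D ≤ N) (hqm : q ≤ m) (hq : 0 < q)
    (hN : 0 ≤ N) : D ≤ N / q := by
  rw [le_div_iff₀ hq]
  rcases le_or_gt 0 D with hD | hD <;> nlinarith

variable {n p : ℕ} (X : Matrix (Fin n) (Fin p) ℝ) {σ : Finset (Fin p)}

lemma mulVec_eq_subCols_mulVec {b : Fin p → ℝ} (hb : ∀ l ∉ σ, b l = 0) :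
    X *ᵥ b = subCols X σ *ᵥ fun l => b l := by
  ext i
  simp only [mulVec, dotProduct, subCols, of_apply]
  rw [← Finset.sum_subset (Finset.subset_univ σ) fun l _ hl => by rw [hb l hl, mul_zero],
    ← Finset.sum_attach, Finset.univ_eq_attach]

lemma mulVec_eq_mulVec_ite_add_mulVec_ite {γs : Finset (Fin p)} {β : Fin p → ℝ}
    (hβ : ∀ l ∉ γs, β l = 0) (σ : Finset (Fin p)) :
    X *ᵥ β = X *ᵥ (fun l => if l ∈ σ then β l else 0) +
      X *ᵥ (fun l => if l ∈ γs \ σ then β l else 0) := by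
  rw [← mulVec_add]
  congr 1
  ext l
  by_cases hl : l ∈ σ <;> by_cases hls : l ∈ γs <;> simp [hl, hls, hβ l]

/-- The least-squares coefficient `β̂(σ)` of `v` on the columns `σ`, extended by zero. -/
noncomputable def lsCoef (σ : Finset (Fin p)) (v : Fin n → ℝ) : Fin p → ℝ :=
  fun l => if h : l ∈ σ then (((gram X σ)⁻¹ * (subCols X σ)ᵀ) *ᵥ v) ⟨l, h⟩ else 0

noncomputable def lsResid (σ : Finset (Fin p)) (v : Fin n → ℝ) : ℝ :=
  ∑ i, (v - proj X σ *ᵥ v) i ^ 2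

lemma lsCoef_of_notMem (v : Fin n → ℝ) {l : Fin p} (hl : l ∉ σ) : lsCoef X σ v l = 0 :=
  dif_neg hl

lemma lsCoef_sub_single_of_notMem_erase (v : Fin n → ℝ) {k l : Fin p} (hl : l ∉ σ.erase k) :
    (lsCoef X σ v - Pi.single k (lsCoef X σ v k) : Fin p → ℝ) l = 0 := by
  rcases eq_or_ne l k with rfl | hlk
  · simp
  · simp [hlk, lsCoef_of_notMem X v fun h => hl (Finset.mem_erase.mpr ⟨hlk, h⟩)]

lemma mulVec_lsCoef (v : Fin n → ℝ) : X *ᵥ lsCoef X σ v = proj X σ *ᵥ v := by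
  rw [mulVec_eq_subCols_mulVec X fun l hl => lsCoef_of_notMem X v hl, proj, Matrix.mul_assoc,
    ← mulVec_mulVec]
  congr 1
  ext l
  simp [lsCoef]

lemma sum_sq_lsCoef (v : Fin n → ℝ) :
    ∑ l ∈ σ, lsCoef X σ v l ^ 2 = ∑ a, (((gram X σ)⁻¹ * (subCols X σ)ᵀ) *ᵥ v) a ^ 2 := by
  rw [← Finset.sum_attach, Finset.univ_eq_attach]
  simp [lsCoef]

lemma sum_sq_lsCoef_le {γs : Finset (Fin p)} {ω : ℝ} (β : Fin p → ℝ)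
    (hω : ∀ u : {l // l ∈ γs \ σ} → ℝ,
      ∑ a, (((gram X σ)⁻¹ * (subCols X σ)ᵀ * subCols X (γs \ σ)) *ᵥ u) a ^ 2 ≤
        ω * ∑ a, u a ^ 2) :
    ∑ l ∈ σ, lsCoef X σ (X *ᵥ fun l => if l ∈ γs \ σ then β l else 0) l ^ 2 ≤
      ω * ∑ l ∈ γs \ σ, β l ^ 2 := by
  have hrestrict : (fun l : {l // l ∈ γs \ σ} => if (l : Fin p) ∈ γs \ σ then β l else 0) =
      fun l : {l // l ∈ γs \ σ} => β l := funext fun l => if_pos l.2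
  rw [sum_sq_lsCoef, mulVec_eq_subCols_mulVec X (σ := γs \ σ) fun l hl => if_neg hl,
    mulVec_mulVec, hrestrict, ← Finset.sum_coe_sort (γs \ σ)]
  exact hω _

section FullRank

variable {X} (hG : IsUnit (gram X σ))
include hG

lemma subCols_transpose_mul_proj : (subCols X σ)ᵀ * proj X σ = (subCols X σ)ᵀ := by
  rw [proj, ← Matrix.mul_assoc, ← Matrix.mul_assoc, ← _root_.gram,
    mul_nonsing_inv _ ((isUnit_iff_isUnit_det _).mp hG), Matrix.one_mul]

lemma proj_mul_subCols : proj X σ * subCols X σ = subCols X σ := by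
  rw [proj, Matrix.mul_assoc, Matrix.mul_assoc, ← _root_.gram,
    nonsing_inv_mul _ ((isUnit_iff_isUnit_det _).mp hG), Matrix.mul_one]

lemma proj_mulVec_mulVec {b : Fin p → ℝ} (hb : ∀ l ∉ σ, b l = 0) :
    proj X σ *ᵥ (X *ᵥ b) = X *ᵥ b := by
  rw [mulVec_eq_subCols_mulVec X hb, mulVec_mulVec, proj_mul_subCols hG]

lemma mulVec_dotProduct_sub_proj {b : Fin p → ℝ} (hb : ∀ l ∉ σ, b l = 0) (v : Fin n → ℝ) :
    (X *ᵥ b) ⬝ᵥ (v - proj X σ *ᵥ v) = 0 := by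
  rw [mulVec_eq_subCols_mulVec X hb, dotProduct_comm, dotProduct_mulVec, ← mulVec_transpose,
    mulVec_sub, mulVec_mulVec, subCols_transpose_mul_proj hG, sub_self, zero_dotProduct]

lemma sum_sq_mulVec_sub {b : Fin p → ℝ} (hb : ∀ l ∉ σ, b l = 0) (v : Fin n → ℝ) :
    ∑ i, (X *ᵥ b - v) i ^ 2 = ∑ i, (X *ᵥ (b - lsCoef X σ v)) i ^ 2 + lsResid X σ v := by
  have hsupp : ∀ l ∉ σ, (b - lsCoef X σ v) l = 0 := fun l hl => by
    simp [hb l hl, lsCoef_of_notMem X v hl]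
  have hsplit : X *ᵥ b - v = X *ᵥ (b - lsCoef X σ v) - (v - proj X σ *ᵥ v) := by
    rw [mulVec_sub, mulVec_lsCoef]
    abel
  rw [hsplit, sum_sq_sub_of_dotProduct_eq_zero (mulVec_dotProduct_sub_proj hG hsupp v), lsResid]

lemma lsResid_le {b : Fin p → ℝ} (hb : ∀ l ∉ σ, b l = 0) (v : Fin n → ℝ) :
    lsResid X σ v ≤ ∑ i, (X *ᵥ b - v) i ^ 2 := by
  rw [sum_sq_mulVec_sub hG hb]
  exact le_add_of_nonneg_left (Finset.sum_nonneg fun i _ => sq_nonneg _)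

lemma sum_sq_proj_mulVec_add {b : Fin p → ℝ} (hb : ∀ l ∉ σ, b l = 0) (v : Fin n → ℝ) :
    ∑ i, (proj X σ *ᵥ (X *ᵥ b + v)) i ^ 2 = ∑ i, (X *ᵥ b + v) i ^ 2 - lsResid X σ v := by
  have horth := mulVec_dotProduct_sub_proj hG (b := b + lsCoef X σ v)
    (fun l hl => by simp [hb l hl, lsCoef_of_notMem X v hl]) v
  rw [mulVec_add, mulVec_lsCoef] at horth
  rw [mulVec_add, proj_mulVec_mulVec hG hb, eq_sub_iff_add_eq, lsResid,
    ← sum_sq_add_of_dotProduct_eq_zero horth, add_add_sub_cancel]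

lemma sum_sq_mulVec_lsCoef_sub_single (v : Fin n → ℝ) (k : Fin p) :
    ∑ i, (X *ᵥ (lsCoef X σ v - Pi.single k (lsCoef X σ v k)) - v) i ^ 2 =
      lsCoef X σ v k ^ 2 * ∑ i, X i k ^ 2 + lsResid X σ v := by
  rw [sum_sq_mulVec_sub hG fun l hl =>
      lsCoef_sub_single_of_notMem_erase X v fun h => hl (Finset.mem_of_mem_erase h),
    sub_sub_cancel_left, mulVec_neg, mulVec_single]
  simp [mul_pow, Finset.mul_sum, mul_comm]

/-- Averages over `k ∈ s` the competitors `β̂(σ) - β̂(σ)_k e_k`, supported on `σ.erase k`. -/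
lemma card_mul_sub_lsResid_le {s : Finset (Fin p)} (hsσ : s ⊆ σ)
    (hnorm : ∀ l, ∑ i, X i l ^ 2 = n) (v : Fin n → ℝ) (b : Fin p → ℝ)
    (hb : ∀ k ∈ s, ∀ b' : Fin p → ℝ, (∀ l ∉ σ.erase k, b' l = 0) →
      ∑ i, (X *ᵥ b - v) i ^ 2 ≤ ∑ i, (X *ᵥ b' - v) i ^ 2) :
    s.card * (∑ i, (X *ᵥ b - v) i ^ 2 - lsResid X σ v) ≤
      n * ∑ l ∈ σ, lsCoef X σ v l ^ 2 := by
  have hdel : ∀ k ∈ s, ∑ i, (X *ᵥ b - v) i ^ 2 - lsResid X σ v ≤ n * lsCoef X σ v k ^ 2 := by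
    intro k hk
    have := hb k hk _ fun _ => lsCoef_sub_single_of_notMem_erase X v
    rw [sum_sq_mulVec_lsCoef_sub_single hG, hnorm] at this
    linarith
  calc s.card * (∑ i, (X *ᵥ b - v) i ^ 2 - lsResid X σ v)
      ≤ ∑ k ∈ s, n * lsCoef X σ v k ^ 2 := by
        rw [← nsmul_eq_mul]
        exact Finset.card_nsmul_le_sum _ _ _ hdel
    _ ≤ n * ∑ l ∈ σ, lsCoef X σ v l ^ 2 := by
        rw [← Finset.mul_sum]
        gcongr

end FullRank

lemma sum_sq_proj_sub_sum_sq_proj_erase {k : Fin p} (hG : IsUnit (gram X σ))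
    (hGk : IsUnit (gram X (σ.erase k))) {b : Fin p → ℝ} (hb : ∀ l ∉ σ, b l = 0) (hbk : b k = 0)
    (v : Fin n → ℝ) :
    ∑ i, (proj X σ *ᵥ (X *ᵥ b + v)) i ^ 2 - ∑ i, (proj X (σ.erase k) *ᵥ (X *ᵥ b + v)) i ^ 2 =
      lsResid X (σ.erase k) v - lsResid X σ v := by
  have hbk' : ∀ l ∉ σ.erase k, b l = 0 := fun l hl => by
    rcases eq_or_ne l k with rfl | hlk
    · exact hbk
    · exact hb l fun h => hl (Finset.mem_erase.mpr ⟨hlk, h⟩)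
  rw [sum_sq_proj_mulVec_add hG hb, sum_sq_proj_mulVec_add hGk hbk']
  ring

end BackwardSwap

open BackwardSwap

theorem backward_swap_loss_general {n p : ℕ} (X : Matrix (Fin n) (Fin p) ℝ) (s₀ : ℕ)
    (γ γs : Finset (Fin p))
    (hsat : γ.card = s₀) (hss : γs.card < s₀)
    (hnorm : ∀ j : Fin p, ∑ i, (X i j) ^ 2 = (n : ℝ))
    (β : Fin p → ℝ) (hβ : ∀ l ∉ γs, β l = 0)
    (j : Fin p) (hj : j ∈ γs \ γ)
    (v : Fin n → ℝ)
    (hv : v = X.mulVec (fun l => if l ∈ γs \ insert j γ then β l else 0))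
    (bhat : Finset (Fin p) → (Fin p → ℝ))
    (hbhat : ∀ γ' : Finset (Fin p),
      (∀ l ∉ γ', bhat γ' l = 0) ∧
      ∀ b : Fin p → ℝ, (∀ l ∉ γ', b l = 0) →
        ∑ i, (X.mulVec (bhat γ') i - v i) ^ 2 ≤ ∑ i, (X.mulVec b i - v i) ^ 2)
    (k : Fin p) (hk : k ∈ γ \ γs)
    (hkmin : ∀ k' ∈ γ \ γs,
      ∑ i, (X.mulVec (bhat ((insert j γ).erase k)) i - v i) ^ 2 ≤
        ∑ i, (X.mulVec (bhat ((insert j γ).erase k')) i - v i) ^ 2)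
    (ω : ℝ)
    (hω : ∀ γ' : Finset (Fin p), IsUnit (gram X γ') →
      ∀ u : {l // l ∈ γs \ γ'} → ℝ,
        (∑ a, (((gram X γ')⁻¹ * (subCols X γ')ᵀ * subCols X (γs \ γ')).mulVec u a) ^ 2) ≤
          ω * ∑ a, u a ^ 2)
    (hU1 : IsUnit (gram X (insert j γ)))
    (hU2 : IsUnit (gram X ((insert j γ).erase k))) :
    (∑ i, ((proj X (insert j γ)).mulVec (X.mulVec β) i) ^ 2) -
      (∑ i, ((proj X ((insert j γ).erase k)).mulVec (X.mulVec β) i) ^ 2) ≤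
    (n : ℝ) * ω * (∑ l ∈ γs \ γ, (β l) ^ 2) / ((s₀ : ℝ) - (γs.card : ℝ)) := by
  obtain ⟨hjs, -⟩ := Finset.mem_sdiff.mp hj
  obtain ⟨-, hks⟩ := Finset.mem_sdiff.mp hk
  simp only [← Pi.sub_apply] at hbhat hkmin
  rw [mulVec_eq_mulVec_ite_add_mulVec_ite X hβ (insert j γ), ← hv,
    sum_sq_proj_sub_sum_sq_proj_erase X hU1 hU2 (fun l hl => if_neg hl) (by simp [hβ k hks])]
  have hτ := lsResid_le hU2 (hbhat ((insert j γ).erase k)).1 v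
  have havg := card_mul_sub_lsResid_le hU1 (s := γ \ γs)
    (Finset.sdiff_subset.trans (Finset.subset_insert _ _)) hnorm v _
    fun k' hk' b' hb' => (hkmin k' hk').trans ((hbhat _).2 b' hb')
  -- The empty model has an invertible (`0 × 0`) Gram matrix.
  have hω₀ : 0 ≤ ω := by
    have h := hω ∅ (isUnit_of_subsingleton _) fun _ => 1
    simp only [Finset.univ_eq_empty, Finset.sum_empty, Finset.univ_eq_attach, one_pow,
      Finset.sum_const, Finset.card_attach, Finset.sdiff_empty, nsmul_eq_mul, mul_one] at h
    exact nonneg_of_mul_nonneg_left h (by simpa using ⟨j, hjs⟩)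
  have hcoef : ∑ l ∈ insert j γ, lsCoef X (insert j γ) v l ^ 2 ≤ ω * ∑ l ∈ γs \ γ, β l ^ 2 := by
    refine (hv ▸ sum_sq_lsCoef_le X β (hω _ hU1)).trans (mul_le_mul_of_nonneg_left ?_ hω₀)
    exact Finset.sum_le_sum_of_subset_of_nonneg
      (Finset.sdiff_subset_sdiff le_rfl (Finset.subset_insert _ _)) fun _ _ _ => sq_nonneg _
  have hcard : (s₀ : ℝ) - γs.card ≤ (γ \ γs).card := by
    have := Finset.le_card_sdiff γs γ
    rw [sub_le_iff_le_add, ← hsat]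
    exact_mod_cast (by omega : γ.card ≤ (γ \ γs).card + γs.card)
  refine le_div_of_mul_le_of_le ?_ hcard (sub_pos.mpr (by exact_mod_cast hss)) (by positivity)
  calc ((γ \ γs).card : ℝ) * _ ≤ n * ∑ l ∈ insert j γ, lsCoef X (insert j γ) v l ^ 2 :=
        havg.trans' (by gcongr)
    _ ≤ n * ω * ∑ l ∈ γs \ γ, β l ^ 2 := by
        rw [mul_assoc]
        gcongr

/-- let `γ` be underfitted and saturated (`|γ| = s₀`, `γ*∖γ ≠ ∅`),
`j ∈ γ*∖γ`, `γ̃ = γ ∪ {j}`, and let `k ∈ γ∖γ*` minimize the least-squares residual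
`‖X β̂(γ̃∖{k}) - X_{γ*∖γ̃} β*_{γ*∖γ̃}‖²`.  Then
`‖Φ_{γ̃} X_{γ*}β*‖² - ‖Φ_{γ̃∖{k}} X_{γ*}β*‖² ≤ n ω(X) ‖β*_{γ*∖γ}‖²/(s₀ - s*)`,
where `ω` bounds the squared operator norm of `(X_{γ'}ᵀX_{γ'})⁻¹X_{γ'}ᵀX_{γ*∖γ'}`
over the model space, and `s* = |γ*|`. -/
theorem backward_swap_loss {n p : ℕ} (X : Matrix (Fin n) (Fin p) ℝ) (s₀ : ℕ)
    (γ γs : Finset (Fin p))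
    (hsat : γ.card = s₀) (hunder : (γs \ γ).Nonempty) (hss : γs.card < s₀)
    (hnorm : ∀ j : Fin p, ∑ i, (X i j) ^ 2 = (n : ℝ))
    (β : Fin p → ℝ) (hβ : ∀ l ∉ γs, β l = 0)
    (j : Fin p) (hj : j ∈ γs \ γ)
    (v : Fin n → ℝ)
    (hv : v = X.mulVec (fun l => if l ∈ γs \ insert j γ then β l else 0))
    (bhat : Finset (Fin p) → (Fin p → ℝ))
    (hbhat : ∀ γ' : Finset (Fin p),
      (∀ l ∉ γ', bhat γ' l = 0) ∧
      ∀ b : Fin p → ℝ, (∀ l ∉ γ', b l = 0) →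
        ∑ i, (X.mulVec (bhat γ') i - v i) ^ 2 ≤ ∑ i, (X.mulVec b i - v i) ^ 2)
    (k : Fin p) (hk : k ∈ γ \ γs)
    (hkmin : ∀ k' ∈ γ \ γs,
      ∑ i, (X.mulVec (bhat ((insert j γ).erase k)) i - v i) ^ 2 ≤
        ∑ i, (X.mulVec (bhat ((insert j γ).erase k')) i - v i) ^ 2)
    (ω : ℝ)
    (hω : ∀ γ' : Finset (Fin p), IsUnit (gram X γ') →
      ∀ u : {l // l ∈ γs \ γ'} → ℝ,
        (∑ a, (((gram X γ')⁻¹ * (subCols X γ')ᵀ * subCols X (γs \ γ')).mulVec u a) ^ 2) ≤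
          ω * ∑ a, u a ^ 2)
    (hU1 : IsUnit (gram X (insert j γ)))
    (hU2 : IsUnit (gram X ((insert j γ).erase k))) :
    (∑ i, ((proj X (insert j γ)).mulVec (X.mulVec β) i) ^ 2) -
      (∑ i, ((proj X ((insert j γ).erase k)).mulVec (X.mulVec β) i) ^ 2) ≤
    (n : ℝ) * ω * (∑ l ∈ γs \ γ, (β l) ^ 2) / ((s₀ : ℝ) - (γs.card : ℝ)) :=
  backward_swap_loss_general X s₀ γ γs hsat hss hnorm β hβ j hj v hv bhat hbhat k hk hkmin ω hω hU1
    hU2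
end

section
/- Conductance upper bound on the spectral gap: for a reversible Markov chain with transition matrix P and stationary distribution π on a finite state space M, 1 − λ₂ ≤ 2 Φ_C, where Φ_C = min over A ⊂ M with 0 < π(A) < 1 of [Σ_{γ∈A} π(γ) P(γ, A^c)] / [π(A) π(A^c)]. -/
/-!
Conjugating `P` by `diag(√π)` gives a matrix that reversibility makes self-adjoint on `ℓ²`; it
fixes `√π` (because `P 1 = 1`) and so preserves `√π^⊥`, which corresponds to the `π`-centred
functions. The top eigenvalue of a self-adjoint operator on an invariant subspace dominates every
Rayleigh quotient there, which yields the Poincaré inequality `(1 - λ₂) Var_π f ≤ 𝓔(f)` for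
centred `f`. For the centred indicator of `A` the variance is `π(A) π(Aᶜ)` and the Dirichlet form
is the flow `Σ_{x∈A} π(x) P(x, Aᶜ)`, so already `1 - λ₂ ≤ Φ(A)`.
-/

open Finset Matrix Module.End

theorem Finset.sum_mul_ite_mem {α R : Type*} [Fintype α] [DecidableEq α]
    [NonUnitalNonAssocSemiring R] (A : Finset α) (g : α → R) (a b : R) :
    ∑ x, g x * (if x ∈ A then a else b) = (∑ x ∈ A, g x) * a + (∑ x ∈ Aᶜ, g x) * b := by
  rw [← sum_add_sum_compl A, sum_mul, sum_mul]
  congr 1 <;> refine sum_congr rfl fun x hx => ?_ <;> simp_all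

theorem LinearMap.IsSymmetric.exists_hasEigenvector_inner_le {E : Type*} [NormedAddCommGroup E]
    [InnerProductSpace ℝ E] [FiniteDimensional ℝ E] {T : E →ₗ[ℝ] E} (hT : T.IsSymmetric)
    {w : E} (hw : w ≠ 0) :
    ∃ μ e, HasEigenvector T μ e ∧ inner ℝ (T w) w ≤ μ * ‖w‖ ^ 2 := by
  have : Nontrivial E := ⟨w, 0, hw⟩
  let R : { x : E // x ≠ 0 } → ℝ := fun x => inner ℝ (T x) (x : E) / ‖(x : E)‖ ^ 2
  have hbdd : BddAbove (Set.range R) := by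
    obtain ⟨C, hC⟩ := (LinearMap.toContinuousLinearMap T).bddAbove_rayleighQuotient
    exact ⟨C, by rintro _ ⟨x, rfl⟩; exact (le_abs_self _).trans (hC ⟨x, rfl⟩)⟩
  obtain ⟨e, he⟩ := hT.hasEigenvalue_iSup_of_finiteDimensional.exists_hasEigenvector
  exact ⟨_, e, he, (div_le_iff₀ (by positivity)).1 (le_ciSup hbdd ⟨w, hw⟩)⟩

theorem LinearMap.IsSymmetric.exists_hasEigenvector_mem_inner_le {E : Type*}
    [NormedAddCommGroup E] [InnerProductSpace ℝ E] [FiniteDimensional ℝ E] {T : E →ₗ[ℝ] E}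
    (hT : T.IsSymmetric) {W : Submodule ℝ E} (hW : ∀ w ∈ W, T w ∈ W) {w : E} (hwW : w ∈ W)
    (hw : w ≠ 0) :
    ∃ μ, ∃ e ∈ W, HasEigenvector T μ e ∧ inner ℝ (T w) w ≤ μ * ‖w‖ ^ 2 := by
  obtain ⟨μ, e, he, hle⟩ :=
    (hT.restrict_invariant hW).exists_hasEigenvector_inner_le (w := ⟨w, hwW⟩) (by simpa using hw)
  refine ⟨μ, e, e.2, ⟨eigenspace_restrict_le_eigenspace T hW μ ⟨e, he.1, rfl⟩, ?_⟩, hle⟩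
  simpa using he.2

namespace MarkovChain

variable {M : Type*} {P : Matrix M M ℝ} {π : M → ℝ}

variable (P π) in
noncomputable def sqrtConj : Matrix M M ℝ := of fun x y => √(π x) * P x y / √(π y)

variable (π) in
noncomputable def sqrtWeight : (M → ℝ) →ₗ[ℝ] EuclideanSpace ℝ M where
  toFun f := WithLp.toLp 2 fun x => √(π x) * f x
  map_add' f g := by ext; simp [mul_add]
  map_smul' c f := by ext; simp only [PiLp.smul_apply]; simp; ring

@[simp]
theorem sqrtWeight_apply (f : M → ℝ) (x : M) : sqrtWeight π f x = √(π x) * f x := rfl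

theorem sqrtConj_isHermitian (hπ : ∀ x, 0 < π x) (hrev : ∀ x y, π x * P x y = π y * P y x) :
    (sqrtConj P π).IsHermitian := by
  ext x y
  have hsq : ∀ z, √(π z) * √(π z) = π z := fun z => Real.mul_self_sqrt (hπ z).le
  simp only [conjTranspose_apply, star_trivial, sqrtConj, of_apply]
  rw [div_eq_div_iff (Real.sqrt_pos.2 (hπ x)).ne' (Real.sqrt_pos.2 (hπ y)).ne']
  linear_combination P y x * hsq y - P x y * hsq x - hrev x y

theorem sqrtWeight_surjective (hπ : ∀ x, 0 < π x) : Function.Surjective (sqrtWeight π) := by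
  intro e
  refine ⟨fun x => e x / √(π x), ?_⟩
  ext x
  simp [mul_div_cancel₀ _ (Real.sqrt_pos.2 (hπ x)).ne']

theorem sqrtWeight_injective (hπ : ∀ x, 0 < π x) : Function.Injective (sqrtWeight π) := by
  refine (injective_iff_map_eq_zero _).2 fun f hf => funext fun x => ?_
  simpa [(Real.sqrt_pos.2 (hπ x)).ne'] using congr($hf x)

variable [Fintype M]

theorem vecMul_eq_self_of_reversible (hst : ∀ x, ∑ y, P x y = 1)
    (hrev : ∀ x y, π x * P x y = π y * P y x) : π ᵥ* P = π := by
  ext y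
  simp [vecMul, dotProduct, hrev _ y, ← mul_sum, hst]

variable (P π) in
noncomputable def dirichletForm (f : M → ℝ) : ℝ := (∑ x, ∑ y, π x * P x y * (f x - f y) ^ 2) / 2

theorem dirichletForm_eq (hst : ∀ x, ∑ y, P x y = 1)
    (hrev : ∀ x y, π x * P x y = π y * P y x) (f : M → ℝ) :
    dirichletForm P π f = ∑ x, π x * f x ^ 2 - ∑ x, π x * (P *ᵥ f) x * f x := by
  have hleft : ∑ x, ∑ y, π x * P x y * f x ^ 2 = ∑ x, π x * f x ^ 2 := by
    simp [← sum_mul, ← mul_sum, hst]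
  have hright : ∑ x, ∑ y, π x * P x y * f y ^ 2 = ∑ x, π x * f x ^ 2 := by
    rw [sum_comm]
    conv_rhs => rw [← vecMul_eq_self_of_reversible hst hrev]
    simp only [vecMul, dotProduct, sum_mul]
  have hcross : ∑ x, ∑ y, π x * P x y * (f x * f y) = ∑ x, π x * (P *ᵥ f) x * f x := by
    simp only [mulVec, dotProduct, mul_sum, sum_mul]
    exact sum_congr rfl fun x _ => sum_congr rfl fun y _ => by ring
  have hexpand : ∀ x y, π x * P x y * (f x - f y) ^ 2 =
      π x * P x y * f x ^ 2 + π x * P x y * f y ^ 2 - 2 * (π x * P x y * (f x * f y)) :=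
    fun x y => by ring
  simp only [dirichletForm, hexpand, sum_add_distrib, sum_sub_distrib, ← mul_sum, hleft, hright,
    hcross]
  ring

theorem dirichletForm_ite_mem [DecidableEq M] (hrev : ∀ x y, π x * P x y = π y * P y x)
    (A : Finset M) (a b : ℝ) :
    dirichletForm P π (fun x => if x ∈ A then a else b) =
      (a - b) ^ 2 * ∑ x ∈ A, π x * ∑ y ∈ Aᶜ, P x y := by
  have hflow : ∑ x ∈ Aᶜ, π x * ∑ y ∈ A, P x y = ∑ x ∈ A, π x * ∑ y ∈ Aᶜ, P x y := by
    simp only [mul_sum]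
    rw [sum_comm]
    exact sum_congr rfl fun x _ => sum_congr rfl fun y _ => hrev y x
  have hrow : ∀ x v, ∑ y, π x * P x y * (v - if y ∈ A then a else b) ^ 2 =
      π x * ((∑ y ∈ A, P x y) * (v - a) ^ 2 + (∑ y ∈ Aᶜ, P x y) * (v - b) ^ 2) := by
    intro x v
    simp only [apply_ite (fun t => (v - t) ^ 2), sum_mul_ite_mem, ← mul_sum]
    ring
  have hin : ∀ x ∈ A, ∑ y, π x * P x y * ((if x ∈ A then a else b) - if y ∈ A then a else b) ^ 2
      = (a - b) ^ 2 * (π x * ∑ y ∈ Aᶜ, P x y) := fun x hx => by rw [if_pos hx, hrow]; ring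
  have hout : ∀ x ∈ Aᶜ, ∑ y, π x * P x y * ((if x ∈ A then a else b) - if y ∈ A then a else b) ^ 2
      = (a - b) ^ 2 * (π x * ∑ y ∈ A, P x y) := fun x hx => by
    rw [if_neg (mem_compl.1 hx), hrow]; ring
  rw [dirichletForm, ← sum_add_sum_compl A, sum_congr rfl hin, sum_congr rfl hout, ← mul_sum,
    ← mul_sum, hflow]
  ring

theorem inner_sqrtWeight (hπ : ∀ x, 0 ≤ π x) (f g : M → ℝ) :
    inner ℝ (sqrtWeight π f) (sqrtWeight π g) = ∑ x, π x * f x * g x := by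
  simp only [PiLp.inner_apply, sqrtWeight_apply, RCLike.inner_apply, conj_trivial]
  refine sum_congr rfl fun x _ => ?_
  linear_combination f x * g x * Real.mul_self_sqrt (hπ x)

theorem norm_sqrtWeight_sq (hπ : ∀ x, 0 ≤ π x) (f : M → ℝ) :
    ‖sqrtWeight π f‖ ^ 2 = ∑ x, π x * f x ^ 2 := by
  rw [← real_inner_self_eq_norm_sq, inner_sqrtWeight hπ]
  simp only [mul_assoc, sq]

theorem toEuclideanLin_sqrtConj_sqrtWeight [DecidableEq M] (hπ : ∀ x, 0 < π x) (f : M → ℝ) :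
    toEuclideanLin (sqrtConj P π) (sqrtWeight π f) = sqrtWeight π (P *ᵥ f) := by
  ext x
  simp only [toLpLin_apply, sqrtWeight_apply, sqrtConj, mulVec, dotProduct, mul_sum, of_apply]
  refine sum_congr rfl fun y _ => ?_
  field_simp [(Real.sqrt_pos.2 (hπ y)).ne']

theorem one_sub_mul_sum_sq_le_dirichletForm [DecidableEq M] (hπ : ∀ x, 0 < π x)
    (hst : ∀ x, ∑ y, P x y = 1) (hrev : ∀ x y, π x * P x y = π y * P y x) {lam : ℝ}
    (hlam : lam ∈ upperBounds {l : ℝ | ∃ v : M → ℝ, v ≠ 0 ∧ (∑ x, π x * v x) = 0 ∧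
      P *ᵥ v = l • v})
    {f : M → ℝ} (hf : ∑ x, π x * f x = 0) :
    (1 - lam) * ∑ x, π x * f x ^ 2 ≤ dirichletForm P π f := by
  rcases eq_or_ne f 0 with rfl | hf0
  · simp [dirichletForm]
  have hπ0 : ∀ x, 0 ≤ π x := fun x => (hπ x).le
  set S := toEuclideanLin (sqrtConj P π)
  have hS : S.IsSymmetric := isSymmetric_toEuclideanLin_iff.2 (sqrtConj_isHermitian hπ hrev)
  have hSw : ∀ g, S (sqrtWeight π g) = sqrtWeight π (P *ᵥ g) :=
    toEuclideanLin_sqrtConj_sqrtWeight hπ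
  have hP1 : P *ᵥ 1 = 1 := funext fun x => by simp [mulVec, dotProduct, hst]
  set W := (ℝ ∙ sqrtWeight π 1)ᗮ
  have hmemW : ∀ g, sqrtWeight π g ∈ W ↔ ∑ x, π x * g x = 0 := by
    intro g
    simp [W, Submodule.mem_orthogonal_singleton_iff_inner_right, inner_sqrtWeight hπ0]
  have hWinv : ∀ w ∈ W, S w ∈ W := by
    intro w hw
    rw [Submodule.mem_orthogonal_singleton_iff_inner_right] at hw ⊢
    rw [← hS, hSw, hP1, hw]
  obtain ⟨μ, e, heW, he, hle⟩ := hS.exists_hasEigenvector_mem_inner_le hWinv ((hmemW f).2 hf)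
    ((map_ne_zero_iff _ (sqrtWeight_injective hπ)).2 hf0)
  obtain ⟨g, rfl⟩ := sqrtWeight_surjective hπ e
  have hμ : μ ≤ lam := hlam ⟨g, fun h => he.2 (by rw [h, map_zero]), (hmemW g).1 heW,
    sqrtWeight_injective hπ (by rw [← hSw, he.apply_eq_smul, map_smul])⟩
  rw [hSw, inner_sqrtWeight hπ0, norm_sqrtWeight_sq hπ0] at hle
  have hvar : 0 ≤ ∑ x, π x * f x ^ 2 := sum_nonneg fun x _ => mul_nonneg (hπ0 x) (sq_nonneg _)
  rw [dirichletForm_eq hst hrev]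
  nlinarith

end MarkovChain

/-- conductance upper bound on the spectral gap: for a reversible
Markov chain with transition matrix `P` and stationary distribution `π`,
`1 - λ₂ ≤ 2 Φ_C`, i.e. for every set `A` with `0 < π(A) < 1`,
`1 - λ₂ ≤ 2 [Σ_{γ∈A} π(γ) P(γ, Aᶜ)] / [π(A) π(Aᶜ)]`.  Here `λ₂` is characterized
as the greatest eigenvalue of `P` with an eigenvector orthogonal to `π`. -/
theorem conductance_upper_bound {M : Type*} [Fintype M] [DecidableEq M]
    (P : Matrix M M ℝ) (π : M → ℝ)
    (hπ : ∀ x, 0 < π x) (hsum : ∑ x, π x = 1)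
    (hst : ∀ x, ∑ y, P x y = 1) (hnn : ∀ x y, 0 ≤ P x y)
    (hrev : ∀ x y, π x * P x y = π y * P y x)
    (lam₂ : ℝ)
    (hlam : IsGreatest {l : ℝ | ∃ v : M → ℝ, v ≠ 0 ∧ (∑ x, π x * v x) = 0 ∧
      P.mulVec v = l • v} lam₂) :
    ∀ A : Finset M, 0 < ∑ x ∈ A, π x → (∑ x ∈ A, π x) < 1 →
      1 - lam₂ ≤ 2 * ((∑ x ∈ A, π x * ∑ y ∈ Aᶜ, P x y) /
        ((∑ x ∈ A, π x) * ∑ x ∈ Aᶜ, π x)) := by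
  intro A hA0 hA1
  set pA := ∑ x ∈ A, π x
  set qA := ∑ x ∈ Aᶜ, π x
  set Q := ∑ x ∈ A, π x * ∑ y ∈ Aᶜ, P x y
  have hpq : pA + qA = 1 := by rw [sum_add_sum_compl, hsum]
  set f : M → ℝ := fun x => if x ∈ A then qA else -pA
  have hmean : ∑ x, π x * f x = 0 := by rw [sum_mul_ite_mem]; ring
  have hvar : ∑ x, π x * f x ^ 2 = pA * qA := by
    simp only [f, apply_ite (· ^ 2), sum_mul_ite_mem]
    linear_combination pA * qA * hpq
  have hdir : MarkovChain.dirichletForm P π f = Q := by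
    rw [MarkovChain.dirichletForm_ite_mem hrev, sub_neg_eq_add, add_comm, hpq, one_pow, one_mul]
  have hgap := MarkovChain.one_sub_mul_sum_sq_le_dirichletForm hπ hst hrev hlam.2 hmean
  rw [hvar, hdir] at hgap
  have hQ : 0 ≤ Q := sum_nonneg fun x _ => mul_nonneg (hπ x).le (sum_nonneg fun y _ => hnn x y)
  have hpq0 : 0 < pA * qA := mul_pos hA0 (by linarith)
  calc 1 - lam₂ ≤ Q / (pA * qA) := by rwa [le_div_iff₀ hpq0]
    _ ≤ 2 * (Q / (pA * qA)) := by linarith [div_nonneg hQ hpq0.le]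
end
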